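/- Let Λ = J(Q,W) be a Jacobian algebra of finite type with n vertices, let m be the maximum length and p the minimum length of a maximal green sequence for Λ. Then m + p - n is at most the number of isomorphism classes of indecomposable Λ-modules. -/

import Mathlib

variable (Λ : Type) [Ring Λ]

/-- A module is Schurian if its endomorphism ring is a division ring. -/
def Schurian (M : ModuleCat.{0} Λ) : Prop :=
  Nontrivial M ∧ ∀ f : M ⟶ M, f = 0 ∨ Function.Bijective f

/-- `X` can be inserted into the sequence `M` at position `k` preserving
forward hom-orthogonality. -/
def Insertable {m : ℕ} (M : Fin m → ModuleCat.{0} Λ) (X : ModuleCat.{0} Λ)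
    (k : ℕ) : Prop :=
  ∀ i : Fin m, ((i : ℕ) < k → ∀ f : M i ⟶ X, f = 0) ∧
    (k ≤ (i : ℕ) → ∀ f : X ⟶ M i, f = 0)

/-- A maximal forward hom-orthogonal sequence of Schurian modules:
`Hom(M_i, M_j) = 0` for `i < j`, and no Schurian module can be inserted
anywhere in the sequence preserving this property.  By the main theorem of the
paper, for a Jacobian algebra `Λ = J(Q,W)` of finite type these correspond
exactly to maximal green sequences (via dimension vectors = `c`-vectors). -/
def MaximalFHO (m : ℕ) (M : Fin m → ModuleCat.{0} Λ) : Prop :=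
  (∀ i, IsFiniteLength Λ (M i)) ∧ (∀ i, Schurian Λ (M i)) ∧
  (∀ i j : Fin m, i < j → ∀ f : M i ⟶ M j, f = 0) ∧
  ¬ ∃ X : ModuleCat.{0} Λ, IsFiniteLength Λ X ∧ Schurian Λ X ∧
      ∃ k ≤ m, Insertable Λ M X k

/-!
Take a maximal sequence `M` of the greatest length `m`, list its simple terms in reverse order
and extend this list to a maximal sequence `N`, whose length is at least `p`. A non-simple
Schurian module `X` has a simple quotient `S` and a simple submodule `T`, and every maximal
sequence through `X` lists `S` before `X` and `X` before `T`. Since `M` and `N` list `S` and `T`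
in opposite orders, they have only simple terms in common up to isomorphism. Counting the
isomorphism classes of their terms then gives `m + ℓ(N) ≤ #ind + n`.
-/

open CategoryTheory

theorem IsSimpleModule.isFiniteLength {R M : Type*} [Ring R] [AddCommGroup M] [Module R M]
    [IsSimpleModule R M] : IsFiniteLength R M :=
  isFiniteLength_iff_isNoetherian_isArtinian.2 ⟨inferInstance, inferInstance⟩

theorem natCast_add_le_encard_add_encard {α : Type*} {s t : Set α} {m ℓ : ℕ}
    {f : Fin m → α} {g : Fin ℓ → α} (hf : Function.Injective f) (hg : Function.Injective g)
    (hfs : Set.range f ⊆ s) (hgs : Set.range g ⊆ s) (hfg : Set.range f ∩ Set.range g ⊆ t) :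
    (m + ℓ : ℕ∞) ≤ s.encard + t.encard :=
  calc (m + ℓ : ℕ∞) ≤ (Set.range f).encard + (Set.range g).encard := by
        gcongr
        · simpa using hf.encard_range
        · simpa using hg.encard_range
    _ = (Set.range f ∪ Set.range g).encard + (Set.range f ∩ Set.range g).encard :=
        (Set.encard_union_add_encard_inter _ _).symm
    _ ≤ s.encard + t.encard := by
        gcongr
        exact Set.union_subset hfs hgs

theorem encard_le_encard_of_iso {C : Type*} [Category C] {s t : Set C}
    (hrep : ∀ x ∈ s, ∃ y ∈ t, Nonempty (x ≅ y))
    (hinj : ∀ x ∈ s, ∀ x' ∈ s, Nonempty (x ≅ x') → x = x') :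
    s.encard ≤ t.encard := by
  choose! f hft hf using hrep
  refine Set.encard_le_encard_of_injOn hft fun x hx x' hx' hxx' => hinj x hx x' hx' ?_
  obtain ⟨e⟩ := hf x hx
  obtain ⟨e'⟩ := hf x' hx'
  exact ⟨e ≪≫ eqToIso hxx' ≪≫ e'.symm⟩

section

variable {Λ}

namespace ModuleCat

variable {X Y S : ModuleCat.{0} Λ}

theorem comp_ne_zero_of_isSimpleModule [IsSimpleModule Λ S] {f : X ⟶ S} {g : S ⟶ Y}
    (hf : f ≠ 0) (hg : g ≠ 0) : f ≫ g ≠ 0 := by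
  have hf' : Function.Surjective f :=
    LinearMap.surjective_of_ne_zero fun h => hf (ModuleCat.hom_ext h)
  have hg' : Function.Injective g :=
    LinearMap.injective_of_ne_zero fun h => hg (ModuleCat.hom_ext h)
  have := IsSimpleModule.nontrivial Λ S
  obtain ⟨s, hs⟩ := exists_ne (0 : S)
  obtain ⟨x, rfl⟩ := hf' s
  intro h
  exact hs (hg' (by simpa using congr($h x)))

theorem iso_hom_ne_zero [Nontrivial X] (e : X ≅ Y) : e.hom ≠ 0 := fun h => by
  obtain ⟨x, hx⟩ := exists_ne (0 : X)
  exact hx (by simpa [h] using congr(($e.hom_inv_id).hom x).symm)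

theorem exists_isSimpleModule_hom_ne_zero (hX : IsFiniteLength Λ X) [Nontrivial X] :
    ∃ S : ModuleCat.{0} Λ, IsSimpleModule Λ S ∧ ∃ f : X ⟶ S, f ≠ 0 := by
  have := (isFiniteLength_iff_isNoetherian_isArtinian.1 hX).1
  obtain ⟨N, hN⟩ := IsCoatomic.exists_coatom (Submodule Λ X)
  refine ⟨of Λ (X ⧸ N), isSimpleModule_iff_isCoatom.2 hN, ofHom N.mkQ, fun h => hN.1 ?_⟩
  simpa using congr(LinearMap.ker ($h).hom)

theorem exists_isSimpleModule_ne_zero_hom (hX : IsFiniteLength Λ X) [Nontrivial X] :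
    ∃ S : ModuleCat.{0} Λ, IsSimpleModule Λ S ∧ ∃ f : S ⟶ X, f ≠ 0 := by
  have := (isFiniteLength_iff_isNoetherian_isArtinian.1 hX).2
  obtain ⟨N, hN⟩ := IsAtomic.exists_atom (Submodule Λ X)
  refine ⟨of Λ N, isSimpleModule_iff_isAtom.2 hN, ofHom N.subtype, fun h => hN.1 ?_⟩
  simpa using congr(LinearMap.range ($h).hom)

end ModuleCat

section Schurian

variable {X S : ModuleCat.{0} Λ}

theorem Schurian.of_isSimpleModule [IsSimpleModule Λ S] : Schurian Λ S :=
  ⟨IsSimpleModule.nontrivial Λ S, fun f =>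
    (LinearMap.bijective_or_eq_zero f.hom).symm.imp ModuleCat.hom_ext id⟩

theorem Schurian.nonempty_iso_of_isSimpleModule (hX : Schurian Λ X) [IsSimpleModule Λ S]
    {f : X ⟶ S} {g : S ⟶ X} (hf : f ≠ 0) (hg : g ≠ 0) : Nonempty (X ≅ S) := by
  have hfg := (hX.2 (f ≫ g)).resolve_left (ModuleCat.comp_ne_zero_of_isSimpleModule hf hg)
  have hf' : Function.Bijective f :=
    ⟨.of_comp hfg.1, LinearMap.surjective_of_ne_zero fun h => hf (ModuleCat.hom_ext h)⟩
  exact ⟨(LinearEquiv.ofBijective f.hom hf').toModuleIso⟩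

end Schurian

structure IsForwardHomOrthogonal {ℓ : ℕ} (M : Fin ℓ → ModuleCat.{0} Λ) : Prop where
  isFiniteLength : ∀ i, IsFiniteLength Λ (M i)
  schurian : ∀ i, Schurian Λ (M i)
  hom_eq_zero : ∀ ⦃i j⦄, i < j → ∀ f : M i ⟶ M j, f = 0

theorem MaximalFHO.isForwardHomOrthogonal {ℓ : ℕ} {M : Fin ℓ → ModuleCat.{0} Λ}
    (hM : MaximalFHO Λ ℓ M) : IsForwardHomOrthogonal M :=
  ⟨hM.1, hM.2.1, hM.2.2.1⟩

namespace IsForwardHomOrthogonal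

variable {ℓ : ℕ} {M : Fin ℓ → ModuleCat.{0} Λ} (hM : IsForwardHomOrthogonal M)
include hM

theorem le_of_ne_zero {i j : Fin ℓ} {f : M i ⟶ M j} (hf : f ≠ 0) : j ≤ i :=
  not_lt.1 fun h => hf (hM.hom_eq_zero h f)

theorem eq_of_iso {i j : Fin ℓ} (e : M i ≅ M j) : i = j := by
  have := (hM.schurian i).1
  have := (hM.schurian j).1
  exact le_antisymm (hM.le_of_ne_zero (ModuleCat.iso_hom_ne_zero e.symm))
    (hM.le_of_ne_zero (ModuleCat.iso_hom_ne_zero e))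

theorem hom_eq_zero_of_isSimpleModule {i j : Fin ℓ} (hij : i ≠ j) [IsSimpleModule Λ (M i)]
    [IsSimpleModule Λ (M j)] (f : M i ⟶ M j) : f = 0 := by
  by_contra hf
  have hf' := LinearMap.bijective_of_ne_zero fun h => hf (ModuleCat.hom_ext h)
  exact hij (hM.eq_of_iso (LinearEquiv.ofBijective f.hom hf').toModuleIso)

theorem comp_of_isSimpleModule {k : ℕ} {σ : Fin k → Fin ℓ} (hσ : Function.Injective σ)
    (hsimple : ∀ t, IsSimpleModule Λ (M (σ t))) : IsForwardHomOrthogonal (M ∘ σ) where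
  isFiniteLength t := hM.isFiniteLength (σ t)
  schurian t := hM.schurian (σ t)
  hom_eq_zero t u htu :=
    have := hsimple t
    have := hsimple u
    hM.hom_eq_zero_of_isSimpleModule (hσ.ne htu.ne)

theorem exists_injective_reps {ind : Set (ModuleCat.{0} Λ)}
    (hindrep : ∀ X : ModuleCat.{0} Λ, IsFiniteLength Λ X → Schurian Λ X →
      ∃ r ∈ ind, Nonempty (X ≅ r)) :
    ∃ r : Fin ℓ → ModuleCat.{0} Λ, Function.Injective r ∧ Set.range r ⊆ ind ∧
      ∀ i, Nonempty (M i ≅ r i) := by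
  choose r hr hiso using fun i => hindrep (M i) (hM.isFiniteLength i) (hM.schurian i)
  refine ⟨r, fun i j hij => ?_, Set.range_subset_iff.2 hr, hiso⟩
  obtain ⟨ei⟩ := hiso i
  obtain ⟨ej⟩ := hiso j
  exact hM.eq_of_iso (ei ≪≫ eqToIso hij ≪≫ ej.symm)

theorem length_le {ind : Set (ModuleCat.{0} Λ)} (hfin : ind.Finite)
    (hindrep : ∀ X : ModuleCat.{0} Λ, IsFiniteLength Λ X → Schurian Λ X →
      ∃ r ∈ ind, Nonempty (X ≅ r)) :
    ℓ ≤ Nat.card ind := by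
  obtain ⟨r, hr, hrind, -⟩ := hM.exists_injective_reps hindrep
  have := hfin.to_subtype
  simpa using Nat.card_le_card_of_injective (fun i => (⟨r i, hrind ⟨i, rfl⟩⟩ : ind))
    fun i j hij => hr (congrArg Subtype.val hij)

theorem insertNth {X : ModuleCat.{0} Λ} (hXfl : IsFiniteLength Λ X) (hX : Schurian Λ X)
    {k : ℕ} (hk : k ≤ ℓ) (hins : Insertable Λ M X k) :
    IsForwardHomOrthogonal (Fin.insertNth (α := fun _ => ModuleCat.{0} Λ)
      ⟨k, Nat.lt_succ_of_le hk⟩ X M) := by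
  set p : Fin (ℓ + 1) := ⟨k, Nat.lt_succ_of_le hk⟩
  refine ⟨?_, ?_, ?_⟩
  · rw [Fin.forall_iff_succAbove p]
    exact ⟨by rwa [Fin.insertNth_apply_same], fun i => by
      rw [Fin.insertNth_apply_succAbove]; exact hM.isFiniteLength i⟩
  · rw [Fin.forall_iff_succAbove p]
    exact ⟨by rwa [Fin.insertNth_apply_same], fun i => by
      rw [Fin.insertNth_apply_succAbove]; exact hM.schurian i⟩
  · intro a b hab
    induction a using Fin.succAboveCases p with
    | x =>
      induction b using Fin.succAboveCases p with
      | x => exact absurd hab (lt_irrefl p)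
      | p j =>
        rw [Fin.insertNth_apply_same, Fin.insertNth_apply_succAbove]
        exact (hins j).2 (by
          simpa [p, Fin.le_def] using (Fin.lt_succAbove_iff_le_castSucc p j).1 hab)
    | p i =>
      induction b using Fin.succAboveCases p with
      | x =>
        rw [Fin.insertNth_apply_same, Fin.insertNth_apply_succAbove]
        exact (hins i).1 (by
          simpa [p, Fin.lt_def] using (Fin.succAbove_lt_iff_castSucc_lt p i).1 hab)
      | p j =>
        rw [Fin.insertNth_apply_succAbove, Fin.insertNth_apply_succAbove]
        exact hM.hom_eq_zero (Fin.succAbove_lt_succAbove_iff.1 hab)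

end IsForwardHomOrthogonal

theorem IsForwardHomOrthogonal.exists_maximalFHO_extension {ind : Set (ModuleCat.{0} Λ)}
    (hfin : ind.Finite)
    (hindrep : ∀ X : ModuleCat.{0} Λ, IsFiniteLength Λ X → Schurian Λ X →
      ∃ r ∈ ind, Nonempty (X ≅ r))
    {ℓ : ℕ} {M : Fin ℓ → ModuleCat.{0} Λ} (hM : IsForwardHomOrthogonal M) :
    ∃ (ℓ' : ℕ) (N : Fin ℓ' → ModuleCat.{0} Λ) (e : Fin ℓ → Fin ℓ'),
      MaximalFHO Λ ℓ' N ∧ StrictMono e ∧ ∀ i, N (e i) = M i := by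
  by_cases hins : ∃ X : ModuleCat.{0} Λ, IsFiniteLength Λ X ∧ Schurian Λ X ∧
      ∃ k ≤ ℓ, Insertable Λ M X k
  · obtain ⟨X, hXfl, hX, k, hk, hins⟩ := hins
    have hM' := hM.insertNth hXfl hX hk hins
    have := hM'.length_le hfin hindrep
    obtain ⟨ℓ', N, e, hN, he, hNe⟩ := hM'.exists_maximalFHO_extension hfin hindrep
    refine ⟨ℓ', N, e ∘ Fin.succAbove ⟨k, Nat.lt_succ_of_le hk⟩, hN,
      he.comp (Fin.strictMono_succAbove _), fun i => ?_⟩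
    rw [Function.comp_apply, hNe, Fin.insertNth_apply_succAbove]
  · exact ⟨ℓ, M, id, ⟨hM.1, hM.2, hM.3, hins⟩, strictMono_id, fun _ => rfl⟩
termination_by Nat.card ind - ℓ
decreasing_by omega

theorem MaximalFHO.exists_iso_of_isSimpleModule {ℓ : ℕ} {M : Fin ℓ → ModuleCat.{0} Λ}
    (hM : MaximalFHO Λ ℓ M) (S : ModuleCat.{0} Λ) [IsSimpleModule Λ S] :
    ∃ i, Nonempty (M i ≅ S) := by
  -- otherwise `S` could be inserted just before the first term with a nonzero map to `S`
  by_contra! hS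
  refine hM.2.2.2 ⟨S, IsSimpleModule.isFiniteLength, .of_isSimpleModule, ?_⟩
  by_cases h : ∃ i, ∃ f : M i ⟶ S, f ≠ 0
  · obtain ⟨i₀, ⟨f, hf⟩, hmin⟩ :=
      wellFounded_lt.has_min {i | ∃ f : M i ⟶ S, f ≠ 0} h
    refine ⟨i₀, i₀.2.le, fun i => ⟨fun hi g => ?_, fun hi g => ?_⟩⟩
    · by_contra hg
      exact hmin i ⟨g, hg⟩ hi
    · by_contra hg
      rcases (show i₀ ≤ i from hi).lt_or_eq with hlt | rfl
      · exact ModuleCat.comp_ne_zero_of_isSimpleModule hf hg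
          (hM.isForwardHomOrthogonal.hom_eq_zero hlt _)
      · exact (hS i₀).false ((hM.2.1 i₀).nonempty_iso_of_isSimpleModule hf hg).some
  · push Not at h
    exact ⟨ℓ, le_rfl, fun i => ⟨fun _ => h i, fun hi => absurd i.2 (not_lt.2 hi)⟩⟩

def ReversesSimples {m ℓ : ℕ} (M : Fin m → ModuleCat.{0} Λ)
    (N : Fin ℓ → ModuleCat.{0} Λ) : Prop :=
  ∀ ⦃a c : Fin m⦄ ⦃b d : Fin ℓ⦄, IsSimpleModule Λ (M a) → IsSimpleModule Λ (M c) →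
    Nonempty (M a ≅ N b) → Nonempty (M c ≅ N d) → a < c → d < b

theorem IsForwardHomOrthogonal.exists_maximalFHO_reversesSimples {ind : Set (ModuleCat.{0} Λ)}
    (hfin : ind.Finite)
    (hindrep : ∀ X : ModuleCat.{0} Λ, IsFiniteLength Λ X → Schurian Λ X →
      ∃ r ∈ ind, Nonempty (X ≅ r))
    {m : ℕ} {M : Fin m → ModuleCat.{0} Λ} (hM : IsForwardHomOrthogonal M) :
    ∃ (ℓ : ℕ) (N : Fin ℓ → ModuleCat.{0} Λ),
      MaximalFHO Λ ℓ N ∧ ReversesSimples M N := by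
  classical
  set P := Finset.univ.filter fun i => IsSimpleModule Λ (M i)
  set s := P.orderEmbOfFin rfl
  have hsP (t : Fin P.card) : IsSimpleModule Λ (M (s t)) :=
    (Finset.mem_filter.1 (P.orderEmbOfFin_mem rfl t)).2
  obtain ⟨ℓ, N, e, hN, he, hNe⟩ :=
    (hM.comp_of_isSimpleModule (σ := s ∘ Fin.rev) (s.injective.comp Fin.rev_injective)
      fun t => hsP t.rev).exists_maximalFHO_extension hfin hindrep
  have hpos {a : Fin m} {b : Fin ℓ} (ha : IsSimpleModule Λ (M a))
      (hab : Nonempty (M a ≅ N b)) : ∃ t, s t = a ∧ e t.rev = b := by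
    obtain ⟨t, rfl⟩ : a ∈ Set.range s := by simp [s, P, ha]
    refine ⟨t, rfl, hN.isForwardHomOrthogonal.eq_of_iso (eqToIso ?_ ≪≫ hab.some)⟩
    simp [hNe]
  refine ⟨ℓ, N, hN, fun a c b d ha hc hab hcd hac => ?_⟩
  obtain ⟨t, rfl, rfl⟩ := hpos ha hab
  obtain ⟨u, rfl, rfl⟩ := hpos hc hcd
  exact he (Fin.rev_lt_rev.2 (s.lt_iff_lt.1 hac))

theorem ReversesSimples.isSimpleModule_of_iso {m ℓ : ℕ} {M : Fin m → ModuleCat.{0} Λ}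
    {N : Fin ℓ → ModuleCat.{0} Λ} (hMN : ReversesSimples M N) (hM : MaximalFHO Λ m M)
    (hN : MaximalFHO Λ ℓ N) {i : Fin m} {j : Fin ℓ} (e : M i ≅ N j) :
    IsSimpleModule Λ (M i) := by
  by_contra hX
  have := (hM.2.1 i).1
  obtain ⟨S, hS, f, hf⟩ := ModuleCat.exists_isSimpleModule_hom_ne_zero (hM.1 i)
  obtain ⟨T, hT, g, hg⟩ := ModuleCat.exists_isSimpleModule_ne_zero_hom (hM.1 i)
  obtain ⟨a, ⟨ea⟩⟩ := hM.exists_iso_of_isSimpleModule S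
  obtain ⟨c, ⟨ec⟩⟩ := hM.exists_iso_of_isSimpleModule T
  obtain ⟨b, ⟨eb⟩⟩ := hN.exists_iso_of_isSimpleModule S
  obtain ⟨d, ⟨ed⟩⟩ := hN.exists_iso_of_isSimpleModule T
  have ha : IsSimpleModule Λ (M a) := .congr ea.toLinearEquiv
  have hc : IsSimpleModule Λ (M c) := .congr ec.toLinearEquiv
  have hXN : ¬ IsSimpleModule Λ (N j) := fun h => hX (.congr e.toLinearEquiv)
  have hb : IsSimpleModule Λ (N b) := .congr eb.toLinearEquiv
  have hd : IsSimpleModule Λ (N d) := .congr ed.toLinearEquiv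
  have hai : a < i := (hM.isForwardHomOrthogonal.le_of_ne_zero (f := f ≫ ea.inv)
    (by simpa using hf)).lt_of_ne (by rintro rfl; exact hX ha)
  have hic : i < c := (hM.isForwardHomOrthogonal.le_of_ne_zero (f := ec.hom ≫ g)
    (by simpa using hg)).lt_of_ne (by rintro rfl; exact hX hc)
  have hbj : b < j := (hN.isForwardHomOrthogonal.le_of_ne_zero (f := e.inv ≫ f ≫ eb.inv)
    (by simpa using hf)).lt_of_ne (by rintro rfl; exact hXN hb)
  have hjd : j < d := (hN.isForwardHomOrthogonal.le_of_ne_zero (f := ed.hom ≫ g ≫ e.hom)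
    (by simpa using hg)).lt_of_ne (by rintro rfl; exact hXN hd)
  exact (hMN ha hc ⟨ea ≪≫ eb.symm⟩ ⟨ec ≪≫ ed.symm⟩ (hai.trans hic)).asymm
    (hbj.trans hjd)

end

/-- Let `Λ = J(Q,W)` be a Jacobian algebra of finite
(representation) type with `n` vertices, i.e. `n` simple modules up to
isomorphism, and with `ind` a finite set of representatives of the isomorphism
classes of indecomposable modules (every Schurian module, being indecomposable,
is isomorphic to exactly one of them).  If `m` is the maximum and `p` the
minimum length of a maximal green sequence for `Λ` — equivalently, of a maximal
forward hom-orthogonal sequence of Schurian modules — then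
`m + p - n` is at most the number of isomorphism classes of indecomposable
`Λ`-modules. -/
theorem stmt_16 (n : ℕ)
    (simples : Set (ModuleCat.{0} Λ))
    (hsimp : ∀ S ∈ simples, IsSimpleModule Λ S)
    (hsimprep : ∀ S : ModuleCat.{0} Λ, IsSimpleModule Λ S →
      ∃ S' ∈ simples, Nonempty (S ≅ S'))
    (hsimpinj : ∀ S ∈ simples, ∀ S' ∈ simples, Nonempty (S ≅ S') → S = S')
    (hcard : Nat.card simples = n)
    (ind : Set (ModuleCat.{0} Λ)) (hfin : ind.Finite)
    (hindrep : ∀ X : ModuleCat.{0} Λ, IsFiniteLength Λ X → Schurian Λ X →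
      ∃ r ∈ ind, Nonempty (X ≅ r))
    (hindinj : ∀ r ∈ ind, ∀ r' ∈ ind, Nonempty (r ≅ r') → r = r')
    (m p : ℕ)
    (hm : (∃ M : Fin m → ModuleCat.{0} Λ, MaximalFHO Λ m M) ∧
      ∀ (ℓ : ℕ) (M : Fin ℓ → ModuleCat.{0} Λ), MaximalFHO Λ ℓ M → ℓ ≤ m)
    (hp : (∃ M : Fin p → ModuleCat.{0} Λ, MaximalFHO Λ p M) ∧
      ∀ (ℓ : ℕ) (M : Fin ℓ → ModuleCat.{0} Λ), MaximalFHO Λ ℓ M → p ≤ ℓ) :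
    m + p ≤ n + Nat.card ind := by
  obtain ⟨⟨M, hM⟩, -⟩ := hm
  obtain ⟨ℓ, N, hN, hMN⟩ :=
    hM.isForwardHomOrthogonal.exists_maximalFHO_reversesSimples hfin hindrep
  obtain ⟨rM, hrM, hrMind, hMr⟩ := hM.isForwardHomOrthogonal.exists_injective_reps hindrep
  obtain ⟨rN, hrN, hrNind, hNr⟩ := hN.isForwardHomOrthogonal.exists_injective_reps hindrep
  have hcommon : Set.range rM ∩ Set.range rN ⊆ {x ∈ ind | IsSimpleModule Λ x} := by
    rintro _ ⟨⟨i, rfl⟩, j, hj⟩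
    obtain ⟨ei⟩ := hMr i
    obtain ⟨ej⟩ := hNr j
    have := hMN.isSimpleModule_of_iso hM hN (ei ≪≫ eqToIso hj.symm ≪≫ ej.symm)
    exact ⟨hrMind ⟨i, rfl⟩, .congr ei.symm.toLinearEquiv⟩
  have hsimples : simples.encard ≤ ind.encard := by
    refine encard_le_encard_of_iso (fun S hS => ?_) hsimpinj
    have := hsimp S hS
    exact hindrep S IsSimpleModule.isFiniteLength .of_isSimpleModule
  have hsfin : simples.Finite := Set.encard_lt_top_iff.1 (hsimples.trans_lt hfin.encard_lt_top)
  have hcount : (m + ℓ : ℕ∞) ≤ Nat.card ind + n :=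
    calc (m + ℓ : ℕ∞) ≤ ind.encard + {x ∈ ind | IsSimpleModule Λ x}.encard :=
          natCast_add_le_encard_add_encard hrM hrN hrMind hrNind hcommon
      _ ≤ ind.encard + simples.encard := add_le_add le_rfl <|
          encard_le_encard_of_iso (fun x hx => hsimprep x hx.2)
            fun x hx x' hx' => hindinj x hx.1 x' hx'.1
      _ = Nat.card ind + n := by
          rw [← hcard, Nat.card_coe_set_eq, Nat.card_coe_set_eq, hfin.cast_ncard_eq,
            hsfin.cast_ncard_eq]
  have hpℓ := hp.2 ℓ N hN
  have : m + ℓ ≤ Nat.card ind + n := by exact_mod_cast hcount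
  omega
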